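/- arXiv:1704.07014 — 3 statements merged into one kernel-verified Lean document; each statement's English description precedes it below -/
import Mathlib

section
/- The golden algebra (ℚ(i,√5)/ℚ(i), σ, i) is a division algebra; equivalently, the reduced norm N_rd(x₀+x₁e) = x₀σ(x₀) − i·x₁σ(x₁) is nonzero for every nonzero element x₀ + x₁e. -/
open Complex
noncomputable def GKfield : Subfield ℂ :=
  Subfield.closure {Complex.I, (Real.sqrt 5 : ℂ)}
lemma I_mem_GK : Complex.I ∈ GKfield :=
  Subfield.subset_closure (Set.mem_insert _ _)
lemma sqrt5_mem_GK : ((Real.sqrt 5 : ℝ) : ℂ) ∈ GKfield :=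
  Subfield.subset_closure (Set.mem_insert_of_mem _ rfl)
noncomputable def iK : GKfield := ⟨Complex.I, I_mem_GK⟩
noncomputable def r5K : GKfield := ⟨(Real.sqrt 5 : ℝ), sqrt5_mem_GK⟩
/-- reduced norm of x₀ + x₁ e -/
noncomputable def Nrd (σ : GKfield →+* GKfield) (A : GKfield × GKfield) : GKfield :=
  A.1 * σ A.1 - iK * (A.2 * σ A.2)
/-- multiplication in the cyclic algebra (K/ℚ(i), σ, i), e² = i, z e = e σ(z) -/
noncomputable def gaMul (σ : GKfield →+* GKfield) (A B : GKfield × GKfield) :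
    GKfield × GKfield :=
  (A.1 * B.1 + iK * (A.2 * σ B.2), A.1 * B.2 + A.2 * σ B.1)

/-!
Write `K = ℚ(i)(√5)`. After clearing denominators, an element of `K` is `(α + β√5)/δ` with
`α, β, δ ∈ ℤ[i]`, and its norm to `ℚ(i)` is `(α² - 5β²)/δ²`. So `Nrd (x₀, x₁) = 0` with
`(x₀, x₁) ≠ 0` yields Gaussian integers, not all zero, with `a² - 5b² = i (c² - 5d²)`,
i.e. `a² - i c² = 5 (b² - i d²)`. Modulo 5 this forces `5 ∣ a, c`, since `i` is not a square in
`ℤ[i]/5 ≅ 𝔽₅ × 𝔽₅` (it maps to `(2, 3)`); dividing out, also `5 ∣ b, d`, and `(a, b, c, d)/5` is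
again a solution. Infinite descent then makes every solution vanish.
-/

open Zsqrtd

local notation "ℤ[i]" => GaussianInt

namespace GaussianInt

theorem five_dvd_iff (z : ℤ[i]) : 5 ∣ z ↔ (z.re : ZMod 5) = 0 ∧ (z.im : ZMod 5) = 0 := by
  rw [show (5 : ℤ[i]) = ((5 : ℤ) : ℤ[i]) by rfl, intCast_dvd,
    ZMod.intCast_zmod_eq_zero_iff_dvd, ZMod.intCast_zmod_eq_zero_iff_dvd]
  rfl

theorem five_dvd_of_five_dvd_sq_sub_sqrtd_mul_sq {x y : ℤ[i]} (h : 5 ∣ x ^ 2 - sqrtd * y ^ 2) :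
    5 ∣ x ∧ 5 ∣ y := by
  have mod_five : ∀ p q t u : ZMod 5, p ^ 2 - q ^ 2 + 2 * t * u = 0 →
      2 * p * q - t ^ 2 + u ^ 2 = 0 → p = 0 ∧ q = 0 ∧ t = 0 ∧ u = 0 := by
    decide
  simp only [five_dvd_iff, sq, re_sub, im_sub, re_mul, im_mul, re_sqrtd, im_sqrtd] at h ⊢
  push_cast at h
  obtain ⟨hp, hq, ht, hu⟩ :=
    mod_five x.re x.im y.re y.im (by linear_combination h.1) (by linear_combination h.2)
  exact ⟨⟨hp, hq⟩, ht, hu⟩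

theorem exists_five_mul_of_sq_sub_five_mul_sq_eq {a b c d : ℤ[i]}
    (h : a ^ 2 - 5 * b ^ 2 = sqrtd * (c ^ 2 - 5 * d ^ 2)) :
    ∃ a' b' c' d' : ℤ[i], a = 5 * a' ∧ b = 5 * b' ∧ c = 5 * c' ∧ d = 5 * d' ∧
      a' ^ 2 - 5 * b' ^ 2 = sqrtd * (c' ^ 2 - 5 * d' ^ 2) := by
  obtain ⟨⟨a', rfl⟩, ⟨c', rfl⟩⟩ := five_dvd_of_five_dvd_sq_sub_sqrtd_mul_sq (x := a) (y := c)
    ⟨b ^ 2 - sqrtd * d ^ 2, by linear_combination h⟩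
  have hbd : b ^ 2 - sqrtd * d ^ 2 = 5 * (a' ^ 2 - sqrtd * c' ^ 2) :=
    mul_left_cancel₀ (by decide : (5 : ℤ[i]) ≠ 0) (by linear_combination -h)
  obtain ⟨⟨b', rfl⟩, ⟨d', rfl⟩⟩ := five_dvd_of_five_dvd_sq_sub_sqrtd_mul_sq ⟨_, hbd⟩
  exact ⟨a', b', c', d', rfl, rfl, rfl, rfl,
    mul_left_cancel₀ (by decide : (5 : ℤ[i]) ≠ 0) (by linear_combination -hbd)⟩

theorem five_pow_dvd_of_sq_sub_five_mul_sq_eq (k : ℕ) {a b c d : ℤ[i]}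
    (h : a ^ 2 - 5 * b ^ 2 = sqrtd * (c ^ 2 - 5 * d ^ 2)) :
    5 ^ k ∣ a ∧ 5 ^ k ∣ b ∧ 5 ^ k ∣ c ∧ 5 ^ k ∣ d := by
  induction k generalizing a b c d with
  | zero => simp
  | succ k ih =>
    obtain ⟨a', b', c', d', rfl, rfl, rfl, rfl, h'⟩ := exists_five_mul_of_sq_sub_five_mul_sq_eq h
    obtain ⟨ha, hb, hc, hd⟩ := ih h'
    simp only [pow_succ']
    exact ⟨mul_dvd_mul_left 5 ha, mul_dvd_mul_left 5 hb, mul_dvd_mul_left 5 hc,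
      mul_dvd_mul_left 5 hd⟩

theorem not_isUnit_five : ¬IsUnit (5 : ℤ[i]) := by
  rw [isUnit_iff_norm_isUnit, Int.isUnit_iff]
  decide

theorem eq_zero_of_forall_five_pow_dvd {z : ℤ[i]} (hz : ∀ k : ℕ, 5 ^ k ∣ z) : z = 0 := by
  by_contra hz0
  obtain ⟨k, hk⟩ := FiniteMultiplicity.of_not_isUnit not_isUnit_five hz0
  exact hk (hz (k + 1))

theorem eq_zero_of_sq_sub_five_mul_sq_eq {a b c d : ℤ[i]}
    (h : a ^ 2 - 5 * b ^ 2 = sqrtd * (c ^ 2 - 5 * d ^ 2)) :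
    a = 0 ∧ b = 0 ∧ c = 0 ∧ d = 0 :=
  ⟨eq_zero_of_forall_five_pow_dvd fun k => (five_pow_dvd_of_sq_sub_five_mul_sq_eq k h).1,
    eq_zero_of_forall_five_pow_dvd fun k => (five_pow_dvd_of_sq_sub_five_mul_sq_eq k h).2.1,
    eq_zero_of_forall_five_pow_dvd fun k => (five_pow_dvd_of_sq_sub_five_mul_sq_eq k h).2.2.1,
    eq_zero_of_forall_five_pow_dvd fun k => (five_pow_dvd_of_sq_sub_five_mul_sq_eq k h).2.2.2⟩

end GaussianInt

section GoldenSubfield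

variable {K : Type*} [Field K] {ι : ℤ[i] →+* K} {r : K}

/-- The subfield `ℚ(i)(r)`, presented by its elements `(α + β r) / δ`. -/
def goldenSubfield (hι : Function.Injective ι) (hr : r * r = 5) : Subfield K where
  carrier := {x | ∃ δ α β : ℤ[i], δ ≠ 0 ∧ ι δ * x = ι α + ι β * r}
  zero_mem' := ⟨1, 0, 0, one_ne_zero, by simp⟩
  one_mem' := ⟨1, 1, 0, one_ne_zero, by simp⟩
  add_mem' := by
    rintro x y ⟨δ, α, β, hδ, hx⟩ ⟨δ', α', β', hδ', hy⟩
    refine ⟨δ * δ', α * δ' + δ * α', β * δ' + δ * β', mul_ne_zero hδ hδ', ?_⟩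
    simp only [map_mul, map_add]
    linear_combination ι δ' * hx + ι δ * hy
  mul_mem' := by
    rintro x y ⟨δ, α, β, hδ, hx⟩ ⟨δ', α', β', hδ', hy⟩
    refine ⟨δ * δ', α * α' + 5 * β * β', α * β' + β * α', mul_ne_zero hδ hδ', ?_⟩
    simp only [map_mul, map_add, map_ofNat]
    linear_combination (ι δ' * y) * hx + (ι α + ι β * r) * hy + ι β * ι β' * hr
  neg_mem' := by
    rintro x ⟨δ, α, β, hδ, hx⟩
    exact ⟨δ, -α, -β, hδ, by simp only [map_neg]; linear_combination -hx⟩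
  inv_mem' := by
    rintro x ⟨δ, α, β, hδ, hx⟩
    rcases eq_or_ne x 0 with rfl | hx0
    · exact ⟨1, 0, 0, one_ne_zero, by simp⟩
    have hγ : α ^ 2 - 5 * β ^ 2 ≠ 0 := by
      intro hγ
      obtain ⟨rfl, rfl, -, -⟩ :=
        GaussianInt.eq_zero_of_sq_sub_five_mul_sq_eq (c := 0) (d := 0) (by simpa using hγ)
      exact mul_ne_zero ((map_ne_zero_iff ι hι).mpr hδ) hx0 (by simpa using hx)
    refine ⟨α ^ 2 - 5 * β ^ 2, δ * α, -(δ * β), hγ, ?_⟩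
    simp only [map_sub, map_mul, map_neg, map_pow, map_ofNat]
    rw [← div_eq_mul_inv, div_eq_iff hx0]
    linear_combination -(ι α - ι β * r) * hx + ι β ^ 2 * hr

theorem sq_mul_mul_map_eq_of_mul_eq {σ : K →+* K} (hσι : ∀ z, σ (ι z) = ι z)
    (hσr : σ r = -r) (hr : r * r = 5) {z : K} {δ α β : ℤ[i]} (hz : ι δ * z = ι α + ι β * r) :
    ι δ ^ 2 * (z * σ z) = ι (α ^ 2 - 5 * β ^ 2) := by
  have hσz : ι δ * σ z = ι α - ι β * r := by
    have := congrArg σ hz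
    simp only [map_mul, map_add, hσι, hσr] at this
    linear_combination this
  calc ι δ ^ 2 * (z * σ z) = (ι δ * z) * (ι δ * σ z) := by ring
    _ = ι (α ^ 2 - 5 * β ^ 2) := by
      rw [hz, hσz, map_sub, map_mul, map_pow, map_pow, map_ofNat]
      linear_combination -(ι β) ^ 2 * hr

theorem eq_zero_of_mul_map_eq_sqrtd_mul {hι : Function.Injective ι} {hr : r * r = 5}
    {σ : K →+* K} (hσι : ∀ z, σ (ι z) = ι z) (hσr : σ r = -r) {x y : K}
    (hx : x ∈ goldenSubfield hι hr) (hy : y ∈ goldenSubfield hι hr)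
    (h : x * σ x = ι sqrtd * (y * σ y)) : x = 0 ∧ y = 0 := by
  obtain ⟨δ, α, β, hδ, hx⟩ := hx
  obtain ⟨δ', α', β', hδ', hy⟩ := hy
  have key : (δ' * α) ^ 2 - 5 * (δ' * β) ^ 2 = sqrtd * ((δ * α') ^ 2 - 5 * (δ * β') ^ 2) := by
    apply hι
    calc ι ((δ' * α) ^ 2 - 5 * (δ' * β) ^ 2) = ι δ' ^ 2 * ι (α ^ 2 - 5 * β ^ 2) := by
          rw [← map_pow, ← map_mul]; ring_nf
      _ = ι δ' ^ 2 * ι δ ^ 2 * (x * σ x) := by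
          rw [← sq_mul_mul_map_eq_of_mul_eq hσι hσr hr hx]; ring
      _ = ι sqrtd * (ι δ ^ 2 * ι (α' ^ 2 - 5 * β' ^ 2)) := by
          rw [h, ← sq_mul_mul_map_eq_of_mul_eq hσι hσr hr hy]; ring
      _ = ι (sqrtd * ((δ * α') ^ 2 - 5 * (δ * β') ^ 2)) := by
          rw [← map_pow, ← map_mul, ← map_mul]; ring_nf
  obtain ⟨h₁, h₂, h₃, h₄⟩ := GaussianInt.eq_zero_of_sq_sub_five_mul_sq_eq key
  simp only [mul_eq_zero, hδ, hδ', false_or] at h₁ h₂ h₃ h₄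
  subst h₁ h₂ h₃ h₄
  simp only [map_zero, zero_mul, add_zero, mul_eq_zero, (map_ne_zero_iff ι hι).mpr hδ,
    (map_ne_zero_iff ι hι).mpr hδ', false_or] at hx hy
  exact ⟨hx, hy⟩

end GoldenSubfield

theorem iK_mul_iK : iK * iK = ((-1 : ℤ) : GKfield) := by
  ext
  simp [iK]

theorem r5K_mul_r5K : r5K * r5K = 5 := by
  ext
  push_cast [r5K]
  rw [← Complex.ofReal_mul, Real.mul_self_sqrt (by norm_num)]
  rfl

noncomputable def gaussianToGK : ℤ[i] →+* GKfield := Zsqrtd.lift ⟨iK, iK_mul_iK⟩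

theorem gaussianToGK_sqrtd : gaussianToGK sqrtd = iK := by
  simp [gaussianToGK]

theorem gaussianToGK_injective : Function.Injective gaussianToGK :=
  Zsqrtd.lift_injective _ fun n h => by nlinarith [sq_nonneg n]

theorem mem_goldenSubfield (z : GKfield) :
    z ∈ goldenSubfield gaussianToGK_injective r5K_mul_r5K := by
  have hle : GKfield ≤ (goldenSubfield gaussianToGK_injective r5K_mul_r5K).map GKfield.subtype := by
    refine Subfield.closure_le.mpr ?_
    rintro w (rfl | rfl)
    · exact ⟨iK, ⟨1, sqrtd, 0, one_ne_zero, by simp [gaussianToGK_sqrtd]⟩, rfl⟩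
    · exact ⟨r5K, ⟨1, 0, 1, one_ne_zero, by simp⟩, rfl⟩
  obtain ⟨w, hw, hwz⟩ := hle z.2
  rwa [← Subtype.ext hwz]

/-- The golden algebra is division: the reduced norm of any nonzero element is nonzero. -/
theorem stmt1 (σ : GKfield →+* GKfield) (hσi : σ iK = iK) (hσ5 : σ r5K = -r5K)
    (A : GKfield × GKfield) (hA : A ≠ 0) :
    Nrd σ A ≠ 0 := by
  have hσι : ∀ z, σ (gaussianToGK z) = gaussianToGK z := RingHom.congr_fun
    (Zsqrtd.hom_ext (σ.comp gaussianToGK) gaussianToGK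
      (by rw [RingHom.comp_apply, gaussianToGK_sqrtd, hσi]))
  intro hN
  obtain ⟨h₁, h₂⟩ := eq_zero_of_mul_map_eq_sqrtd_mul hσι hσ5 (mem_goldenSubfield A.1)
    (mem_goldenSubfield A.2) (by rw [gaussianToGK_sqrtd]; exact sub_eq_zero.mp hN)
  exact hA (Prod.ext h₁ h₂)
end

section
/- The element i ∈ ℚ(i) is not a relative norm from ℚ(i,√5): there is no z ∈ ℚ(i,√5) with z·σ(z) = i, where σ is the nontrivial ℚ(i)-automorphism of ℚ(i,√5). -/
open Complex
/-!
Write `z = x + y√5` with `x, y ∈ ℚ(i)`, so that `z σ(z) = x² - 5y²`. The equation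
`x² - 5y² = i` fails locally at the prime `2 + i` of `ℤ[i]`: `5` is a uniformizer there, and the
unit `i` reduces to `3`, a non-square in the residue field `𝔽₅`. Concretely, in rational
coordinates with denominators cleared, reduction mod 5 forces every coordinate to be divisible by
5, and infinite descent finishes.
-/

local notation "√5" => ((Real.sqrt 5 : ℝ) : ℂ)

lemma sqrt_five_sq : √5 ^ 2 = 5 := by
  exact_mod_cast Real.sq_sqrt (by norm_num : (0 : ℝ) ≤ 5)

lemma exists_rat_coords_of_mem_algebraAdjoin {z : ℂ} (hz : z ∈ Algebra.adjoin ℚ {I, √5}) :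
    ∃ a b c d : ℚ, z = a + b * I + c * √5 + d * (I * √5) := by
  induction hz using Algebra.adjoin_induction with
  | mem x hx =>
    rcases hx with rfl | rfl
    · exact ⟨0, 1, 0, 0, by push_cast; ring⟩
    · exact ⟨0, 0, 1, 0, by push_cast; ring⟩
  | algebraMap q => exact ⟨q, 0, 0, 0, by simp⟩
  | add x y _ _ hx hy =>
    obtain ⟨a, b, c, d, rfl⟩ := hx
    obtain ⟨a', b', c', d', rfl⟩ := hy
    exact ⟨a + a', b + b', c + c', d + d', by push_cast; ring⟩
  | mul x y _ _ hx hy =>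
    obtain ⟨a, b, c, d, rfl⟩ := hx
    obtain ⟨a', b', c', d', rfl⟩ := hy
    refine ⟨a * a' - b * b' + 5 * (c * c') - 5 * (d * d'),
      a * b' + b * a' + 5 * (c * d') + 5 * (d * c'),
      a * c' + c * a' - b * d' - d * b', a * d' + d * a' + b * c' + c * b', ?_⟩
    push_cast
    linear_combination (↑b + ↑d * √5) * (↑b' + ↑d' * √5) * I_sq
      + (↑c * ↑c' + (↑c * ↑d' + ↑d * ↑c') * I - ↑d * ↑d') * sqrt_five_sq

/-- As `i` and `√5` are algebraic, the field they generate is the ring they generate over `ℚ`. -/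
lemma exists_rat_coords_of_mem_GKfield {z : ℂ} (hz : z ∈ GKfield) :
    ∃ a b c d : ℚ, z = a + b * I + c * √5 + d * (I * √5) := by
  have hsqrt : IsAlgebraic ℚ √5 :=
    .of_pow two_pos (by rw [sqrt_five_sq]; exact isAlgebraic_algebraMap (5 : ℚ))
  have hle : GKfield ≤ (IntermediateField.adjoin ℚ {I, √5}).toSubfield :=
    Subfield.closure_le.mpr (IntermediateField.subset_adjoin ℚ _)
  apply exists_rat_coords_of_mem_algebraAdjoin
  rw [← IntermediateField.adjoin_toSubalgebra_of_isAlgebraic]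
  · exact hle hz
  · rintro x (rfl | rfl)
    exacts [isIntegral_rat_I.isAlgebraic, hsqrt]

lemma ZMod.eq_zero_of_sq_eq_sq_of_two_mul_eq_sq (x y z : ZMod 5) (h₁ : x ^ 2 = y ^ 2)
    (h₂ : 2 * (x * y) = z ^ 2) : x = 0 ∧ y = 0 ∧ z = 0 := by
  -- `x = ±y`, so `±2 x² = z²`, and `±2` are non-squares mod 5
  revert x y z
  decide

lemma Int.five_dvd_of_five_dvd_sq_sub_sq {x y z : ℤ} (h₁ : 5 ∣ x ^ 2 - y ^ 2)
    (h₂ : 5 ∣ 2 * (x * y) - z ^ 2) : 5 ∣ x ∧ 5 ∣ y ∧ 5 ∣ z := by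
  have h₁ := (ZMod.intCast_zmod_eq_zero_iff_dvd _ 5).mpr h₁
  have h₂ := (ZMod.intCast_zmod_eq_zero_iff_dvd _ 5).mpr h₂
  push_cast [sub_eq_zero] at h₁ h₂
  simpa only [ZMod.intCast_zmod_eq_zero_iff_dvd, Nat.cast_ofNat] using
    ZMod.eq_zero_of_sq_eq_sq_of_two_mul_eq_sq _ _ _ h₁ h₂

/-- The hypotheses are the real and imaginary parts of `(P + Q i)² - 5 (R + S i)² = N² i`. -/
theorem Int.eq_zero_of_sq_sub_five_sq_eq_I_mul_sq {P Q R S N : ℤ}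
    (h₁ : P ^ 2 - Q ^ 2 = 5 * (R ^ 2 - S ^ 2)) (h₂ : 2 * (P * Q - 5 * (R * S)) = N ^ 2) :
    N = 0 := by
  induction hn : N.natAbs using Nat.strong_induction_on generalizing P Q R S N with
  | _ n ih =>
  obtain ⟨⟨P, rfl⟩, ⟨Q, rfl⟩, ⟨N, rfl⟩⟩ := Int.five_dvd_of_five_dvd_sq_sub_sq (x := P) (y := Q)
    (z := N) ⟨_, h₁⟩ ⟨2 * (R * S), by linear_combination h₂⟩
  have hRS₁ : R ^ 2 - S ^ 2 = 5 * (P ^ 2 - Q ^ 2) :=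
    mul_left_cancel₀ (by norm_num : (5 : ℤ) ≠ 0) (by linear_combination -h₁)
  have hRS₂ : 2 * (R * S) - 0 ^ 2 = 5 * (2 * (P * Q) - N ^ 2) :=
    mul_left_cancel₀ (by norm_num : (5 : ℤ) ≠ 0) (by linear_combination -h₂)
  obtain ⟨⟨R, rfl⟩, ⟨S, rfl⟩, -⟩ := Int.five_dvd_of_five_dvd_sq_sub_sq ⟨_, hRS₁⟩ ⟨_, hRS₂⟩
  have h₁' : P ^ 2 - Q ^ 2 = 5 * (R ^ 2 - S ^ 2) :=
    mul_left_cancel₀ (by norm_num : (25 : ℤ) ≠ 0) (by linear_combination h₁)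
  have h₂' : 2 * (P * Q - 5 * (R * S)) = N ^ 2 :=
    mul_left_cancel₀ (by norm_num : (25 : ℤ) ≠ 0) (by linear_combination h₂)
  by_contra hN
  have hN' : N ≠ 0 := right_ne_zero_of_mul hN
  have hlt : N.natAbs < n := by
    rw [← hn, Int.natAbs_mul, show (5 : ℤ).natAbs = 5 from rfl]
    have := Int.natAbs_pos.mpr hN'
    omega
  exact hN' (ih _ hlt h₁' h₂' rfl)

lemma Rat.exists_intCast_eq_mul_of_den_dvd {q : ℚ} {n : ℕ} (h : q.den ∣ n) :
    ∃ m : ℤ, (m : ℚ) = q * n := by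
  obtain ⟨k, rfl⟩ := h
  exact ⟨q.num * k, by push_cast; rw [← Rat.mul_den_eq_num]; ring⟩

theorem gaussianRat_sq_sub_five_mul_sq_ne_I (a b c d : ℚ) :
    ((a : ℂ) + b * I) ^ 2 - 5 * ((c : ℂ) + d * I) ^ 2 ≠ I := by
  intro h
  have hre := congrArg re h
  have him := congrArg im h
  simp only [sq, sub_re, sub_im, mul_re, mul_im, add_re, add_im, I_re, I_im, re_ofNat, im_ofNat,
    ratCast_re, ratCast_im] at hre him
  have h₁ : a ^ 2 - b ^ 2 = 5 * (c ^ 2 - d ^ 2) := by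
    exact_mod_cast (by linear_combination hre : (a : ℝ) ^ 2 - b ^ 2 = 5 * (c ^ 2 - d ^ 2))
  have h₂ : 2 * (a * b - 5 * (c * d)) = 1 := by
    exact_mod_cast (by linear_combination him : 2 * ((a : ℝ) * b - 5 * (c * d)) = 1)
  set D := a.den * b.den * c.den * d.den
  have hD : (D : ℚ) ≠ 0 := by positivity
  obtain ⟨P, hP⟩ :=
    Rat.exists_intCast_eq_mul_of_den_dvd (q := a) (n := D) ⟨b.den * c.den * d.den, by ring⟩
  obtain ⟨Q, hQ⟩ :=
    Rat.exists_intCast_eq_mul_of_den_dvd (q := b) (n := D) ⟨a.den * c.den * d.den, by ring⟩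
  obtain ⟨R, hR⟩ :=
    Rat.exists_intCast_eq_mul_of_den_dvd (q := c) (n := D) ⟨a.den * b.den * d.den, by ring⟩
  obtain ⟨S, hS⟩ :=
    Rat.exists_intCast_eq_mul_of_den_dvd (q := d) (n := D) ⟨a.den * b.den * c.den, by ring⟩
  have e₁ : P ^ 2 - Q ^ 2 = 5 * (R ^ 2 - S ^ 2) := by
    exact_mod_cast (by rw [hP, hQ, hR, hS]; linear_combination (D : ℚ) ^ 2 * h₁ :
      (P : ℚ) ^ 2 - Q ^ 2 = 5 * (R ^ 2 - S ^ 2))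
  have e₂ : 2 * (P * Q - 5 * (R * S)) = (D : ℤ) ^ 2 := by
    exact_mod_cast (by rw [hP, hQ, hR, hS]; linear_combination (D : ℚ) ^ 2 * h₂ :
      2 * ((P : ℚ) * Q - 5 * (R * S)) = (D : ℚ) ^ 2)
  exact hD (by exact_mod_cast Int.eq_zero_of_sq_sub_five_sq_eq_I_mul_sq e₁ e₂)

/-- i is not a relative norm from ℚ(i,√5) to ℚ(i). -/
theorem stmt2 (σ : GKfield →+* GKfield) (hσi : σ iK = iK) (hσ5 : σ r5K = -r5K) :
    ¬ ∃ z : GKfield, z * σ z = iK := by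
  rintro ⟨z, hz⟩
  obtain ⟨a, b, c, d, hz_eq⟩ := exists_rat_coords_of_mem_GKfield z.2
  have hz' : z = a + b * iK + c * r5K + d * (iK * r5K) := by
    apply Subtype.ext
    push_cast [iK, r5K]
    exact hz_eq
  have hσz : σ z = a + b * iK - c * r5K - d * (iK * r5K) := by
    simp only [hz', map_add, map_mul, map_ratCast, hσi, hσ5]
    ring
  apply gaussianRat_sq_sub_five_mul_sq_ne_I a b c d
  have h := congrArg Subtype.val hz
  rw [hσz, hz'] at h
  push_cast [iK, r5K] at h
  linear_combination h + ((c : ℂ) + d * I) ^ 2 * sqrt_five_sq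
end

section
/- In the ring of integers O_K of K = ℚ(e,√5) (with e² = i), the ideal generated by 2 factors as 2·O_K = ((1 + i·e)·O_K)⁴. -/
open NumberField

section EighthRootOfUnity

variable {R : Type*} [CommRing R] {x : R}

theorem one_add_pow_four_of_pow_four_eq_neg_one (hx : x ^ 4 = -1) :
    (1 + x) ^ 4 = 2 * (x * (2 + 3 * x + 2 * x ^ 2)) := by
  linear_combination hx

/-- With `√2 = x - x³`, the cofactor is `x² (3 + 2√2)`, and `3 + 2√2` has inverse `3 - 2√2`. -/
theorem isUnit_cofactor_of_pow_four_eq_neg_one (hx : x ^ 4 = -1) :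
    IsUnit (x * (2 + 3 * x + 2 * x ^ 2)) :=
  IsUnit.of_mul_eq_one (2 * x ^ 3 - 3 * x ^ 2 + 2 * x) <| by
    linear_combination (4 * x ^ 2 - 1) * hx

theorem associated_two_one_add_pow_four (hx : x ^ 4 = -1) :
    Associated (2 : R) ((1 + x) ^ 4) := by
  obtain ⟨u, hu⟩ := isUnit_cofactor_of_pow_four_eq_neg_one hx
  exact ⟨u, by rw [hu, one_add_pow_four_of_pow_four_eq_neg_one hx]⟩

end EighthRootOfUnity

theorem stmt7_general (K : Type*) [Field K] (e : 𝓞 K)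
    (he : e ^ 4 = -1) :
    Ideal.span {(2 : 𝓞 K)} = (Ideal.span {1 + e ^ 2 * e}) ^ 4 := by
  have he3 : (e ^ 2 * e) ^ 4 = -1 := by linear_combination (e ^ 8 - e ^ 4 + 1) * he
  rw [Ideal.span_singleton_pow, Ideal.span_singleton_eq_span_singleton]
  exact associated_two_one_add_pow_four he3

/-- In the ring of integers of K = ℚ(e,√5), with e² = i (e a primitive 8th root
of unity), the ideal (2) factors as ((1 + i·e))⁴, where i·e = e³. -/
theorem stmt7 (K : Type*) [Field K] [NumberField K] (e s5 : 𝓞 K)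
    (he : e ^ 4 = -1) (hs5 : s5 ^ 2 = 5)
    (hK : IntermediateField.adjoin ℚ {(e : K), (s5 : K)} = ⊤) :
    Ideal.span {(2 : 𝓞 K)} = (Ideal.span {1 + e ^ 2 * e}) ^ 4 :=
  stmt7_general K e he
end
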